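/- Define G(x̄, λ) := λ e_2 g₀(x̄) + (1-λ) e_2 g₁(x̄) for λ ∈ [0,1], where g₀(x) = max{-x, -(1/2)(x-1)² + 1/2, x - 3/2} and g₁(x) = max{-x + 1/2, -(1/2)(x-1)² + 1/2, x - 2}, and e_2 denotes the Moreau envelope with parameter r = 2. Then at λ = 1/2, the two points x̄₁ = (2-√3)/2 and x̄₃ = (2+√3)/2 satisfy G(x̄₁, 1/2) = G(x̄₃, 1/2) = (2-√3)/2, and both are global minimizers of G(·, 1/2); hence argmin_x G(x, 1/2) is not a singleton. -/

import Mathlib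

/-!
`g₁` is the reflection of `g₀` about `1`, so `G(·, 1/2)` is symmetric about `1` and
`x̄₃ = 2 - x̄₁`. Since `(y - x)² + (z - x)² ≥ (y - z)² / 2`, twice `G(x, 1/2)` is at least
`inf_{y,z} g₀ y + g₀ (2 - z) + (y - z)² / 2`. Splitting `g₀` into its three pieces (linear,
concave parabola, linear, meeting at `0` and `√3`) shows this infimum is `2 - √3`, attained at
`(y, 2 - z) = (0, √3)`; these inner points give the matching upper bound at `x̄₁`.
-/

noncomputable def g₀ (x : ℝ) : ℝ :=
  max (max (-x) (-(1 / 2) * (x - 1) ^ 2 + 1 / 2)) (x - 3 / 2)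

noncomputable def g₁ (x : ℝ) : ℝ :=
  max (max (-x + 1 / 2) (-(1 / 2) * (x - 1) ^ 2 + 1 / 2)) (x - 2)

noncomputable def env2 (f : ℝ → ℝ) (x : ℝ) : ℝ := ⨅ y : ℝ, (f y + (y - x) ^ 2)

noncomputable def G (x lam : ℝ) : ℝ := lam * env2 g₀ x + (1 - lam) * env2 g₁ x

open Real

theorem sqrt_three_bounds : √3 ^ 2 = 3 ∧ 1 < √3 ∧ √3 < 2 := by
  have h3 : √3 ^ 2 = 3 := sq_sqrt (by norm_num)
  exact ⟨h3, by nlinarith [sqrt_nonneg 3], by nlinarith [sqrt_nonneg 3]⟩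

section MoreauEnvelope

variable {f g : ℝ → ℝ}

theorem env2_le (hf : BddBelow (Set.range f)) (x y : ℝ) : env2 f x ≤ f y + (y - x) ^ 2 := by
  obtain ⟨b, hb⟩ := hf
  refine ciInf_le ⟨b, ?_⟩ y
  rintro _ ⟨z, rfl⟩
  linarith [hb ⟨z, rfl⟩, sq_nonneg (z - x)]

theorem env2_comp_sub (f : ℝ → ℝ) (a x : ℝ) :
    env2 (fun y ↦ f (a - y)) x = env2 f (a - x) :=
  (Equiv.subLeft a).iInf_congr fun y ↦ by simp only [Equiv.subLeft_apply]; ring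

theorem le_env2_add_env2 {c : ℝ} (h : ∀ y z, c ≤ f y + g z + (y - z) ^ 2 / 2) (x : ℝ) :
    c ≤ env2 f x + env2 g x := by
  have hg : ∀ y, c - (f y + (y - x) ^ 2) ≤ env2 g x := fun y ↦
    le_ciInf fun z ↦ by nlinarith [h y z, sq_nonneg (y + z - 2 * x)]
  have hf : c - env2 g x ≤ env2 f x := le_ciInf fun y ↦ by linarith [hg y]
  linarith

end MoreauEnvelope

theorem g₁_eq_g₀_two_sub (x : ℝ) : g₁ x = g₀ (2 - x) := by
  have hparabola : -(1 / 2) * (2 - x - 1) ^ 2 + 1 / 2 = -(1 / 2) * (x - 1) ^ 2 + 1 / 2 := by ring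
  rw [g₀, g₁, hparabola, show -(2 - x) = x - 2 by ring, show 2 - x - 3 / 2 = -x + 1 / 2 by ring]
  simp only [max_comm, max_left_comm]

theorem neg_le_g₀ (y : ℝ) : -y ≤ g₀ y := le_trans (le_max_left _ _) (le_max_left _ _)

theorem parabola_le_g₀ (y : ℝ) : -(1 / 2) * (y - 1) ^ 2 + 1 / 2 ≤ g₀ y :=
  le_trans (le_max_right _ _) (le_max_left _ _)

theorem sub_le_g₀ (y : ℝ) : y - 3 / 2 ≤ g₀ y := le_max_right _ _

theorem bddBelow_range_g₀ : BddBelow (Set.range g₀) :=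
  ⟨-3 / 4, by rintro _ ⟨y, rfl⟩; linarith [neg_le_g₀ y, sub_le_g₀ y]⟩

theorem g₀_zero : g₀ 0 = 0 := by norm_num [g₀]

theorem g₀_sqrt_three : g₀ √3 = √3 - 3 / 2 := by
  obtain ⟨h3, h1, -⟩ := sqrt_three_bounds
  refine le_antisymm (max_le (max_le ?_ ?_) le_rfl) (sub_le_g₀ _) <;> nlinarith

theorem env2_g₁ (x : ℝ) : env2 g₁ x = env2 g₀ (2 - x) := by
  rw [show g₁ = fun y ↦ g₀ (2 - y) from funext g₁_eq_g₀_two_sub, env2_comp_sub]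

section CoupledBound

variable {u v : ℝ}

theorem coupled_bound_of_nonpos (hu : u ≤ 0) (v : ℝ) :
    2 - √3 ≤ g₀ u + g₀ v + (u + v - 2) ^ 2 / 2 := by
  obtain ⟨h3, hl, hh⟩ := sqrt_three_bounds
  have hgu := neg_le_g₀ u
  rcases le_total v 0 with hv | hv
  · nlinarith [neg_le_g₀ v]
  rcases le_total v √3 with hv' | hv'
  · nlinarith [parabola_le_g₀ v]
  · nlinarith [sub_le_g₀ v, sq_nonneg (u + v - √3),
      mul_nonneg (sub_nonneg.2 hv') (sub_nonneg.2 hl.le)]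

theorem coupled_bound_of_sqrt_three_le (hu : √3 ≤ u) (hv : 0 ≤ v) :
    2 - √3 ≤ g₀ u + g₀ v + (u + v - 2) ^ 2 / 2 := by
  obtain ⟨h3, hl, hh⟩ := sqrt_three_bounds
  have hgu := sub_le_g₀ u
  rcases le_total v √3 with hv' | hv'
  · nlinarith [parabola_le_g₀ v, mul_nonneg hv (sub_nonneg.2 hv')]
  · nlinarith [sub_le_g₀ v]

theorem coupled_bound_of_mem_Icc (hu : u ∈ Set.Icc 0 √3) (hv : v ∈ Set.Icc 0 √3) :
    2 - √3 ≤ g₀ u + g₀ v + (u + v - 2) ^ 2 / 2 := by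
  obtain ⟨h3, hl, hh⟩ := sqrt_three_bounds
  nlinarith [parabola_le_g₀ u, parabola_le_g₀ v, mul_nonneg hu.1 hv.1,
    mul_nonneg (sub_nonneg.2 hu.2) (sub_nonneg.2 hv.2)]

theorem coupled_bound (u v : ℝ) : 2 - √3 ≤ g₀ u + g₀ v + (u + v - 2) ^ 2 / 2 := by
  have hsymm : g₀ v + g₀ u + (v + u - 2) ^ 2 / 2 = g₀ u + g₀ v + (u + v - 2) ^ 2 / 2 := by ring
  rcases le_total u 0 with hu | hu
  · exact coupled_bound_of_nonpos hu v
  rcases le_total v 0 with hv | hv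
  · exact hsymm ▸ coupled_bound_of_nonpos hv u
  rcases le_total √3 u with hu' | hu'
  · exact coupled_bound_of_sqrt_three_le hu' hv
  rcases le_total √3 v with hv' | hv'
  · exact hsymm ▸ coupled_bound_of_sqrt_three_le hv' hu
  exact coupled_bound_of_mem_Icc ⟨hu, hu'⟩ ⟨hv, hv'⟩

end CoupledBound

theorem G_half (x : ℝ) : G x (1 / 2) = (env2 g₀ x + env2 g₀ (2 - x)) / 2 := by
  rw [G, env2_g₁]; ring

theorem G_half_two_sub (x : ℝ) : G (2 - x) (1 / 2) = G x (1 / 2) := by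
  rw [G_half, G_half, sub_sub_cancel, add_comm]

theorem two_sub_sqrt_three_div_two_le_G_half (x : ℝ) : (2 - √3) / 2 ≤ G x (1 / 2) := by
  have hsum : 2 - √3 ≤ env2 g₀ x + env2 g₁ x := le_env2_add_env2 (fun y z ↦ by
    simpa only [g₁_eq_g₀_two_sub, show y + (2 - z) - 2 = y - z by ring]
      using coupled_bound y (2 - z)) x
  rw [G]; linarith

theorem G_half_le : G ((2 - √3) / 2) (1 / 2) ≤ (2 - √3) / 2 := by
  obtain ⟨h3, -, -⟩ := sqrt_three_bounds
  have h₀ := env2_le bddBelow_range_g₀ ((2 - √3) / 2) 0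
  have h₃ := env2_le bddBelow_range_g₀ (2 - (2 - √3) / 2) √3
  rw [g₀_zero] at h₀
  rw [g₀_sqrt_three] at h₃
  rw [G_half]; nlinarith

theorem two_minimizers_at_half :
    G ((2 - Real.sqrt 3) / 2) (1 / 2) = (2 - Real.sqrt 3) / 2 ∧
    G ((2 + Real.sqrt 3) / 2) (1 / 2) = (2 - Real.sqrt 3) / 2 ∧
    (∀ x : ℝ, G ((2 - Real.sqrt 3) / 2) (1 / 2) ≤ G x (1 / 2)) ∧
    (∀ x : ℝ, G ((2 + Real.sqrt 3) / 2) (1 / 2) ≤ G x (1 / 2)) ∧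
    ¬ (Set.Subsingleton {x : ℝ | ∀ z : ℝ, G x (1 / 2) ≤ G z (1 / 2)}) := by
  have hval₁ : G ((2 - √3) / 2) (1 / 2) = (2 - √3) / 2 :=
    le_antisymm G_half_le (two_sub_sqrt_three_div_two_le_G_half _)
  have hval₃ : G ((2 + √3) / 2) (1 / 2) = (2 - √3) / 2 := by
    rw [show (2 + √3) / 2 = 2 - (2 - √3) / 2 by ring, G_half_two_sub, hval₁]
  have hmin₁ : ∀ x, G ((2 - √3) / 2) (1 / 2) ≤ G x (1 / 2) := by
    rw [hval₁]; exact two_sub_sqrt_three_div_two_le_G_half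
  have hmin₃ : ∀ x, G ((2 + √3) / 2) (1 / 2) ≤ G x (1 / 2) := by
    rw [hval₃]; exact two_sub_sqrt_three_div_two_le_G_half
  refine ⟨hval₁, hval₃, hmin₁, hmin₃, fun hsub ↦ ?_⟩
  have hne : (2 - √3) / 2 ≠ (2 + √3) / 2 := by
    have : 0 < √3 := by positivity
    intro h; linarith
  exact hne (hsub hmin₁ hmin₃)
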